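/- (Bounded geodesic image for contact graphs.) Let X be a CAT(0) cube complex, H a hyperplane, and γ ⊆ X a combinatorial geodesic whose image in the contact graph 𝒞X is disjoint from the closed 1-ball around H in the crossing graph. Then the projection π_H(γ) to the contact graph of H is a single clique; in particular, all 0-cubes of γ have the same projection to 𝒞H. -/

import Mathlib

/-- A combinatorial model of a CAT(0) cube complex: its `0`--skeleton is a
median graph, encoded by its wallspace (hyperplanes and halfspaces), with
the graph metric on the `1`--skeleton equal to the wall-counting metric. -/
structure CubeComplex where
  /-- vertices (`0`--cubes) -/
  V : Type
  /-- hyperplanes (walls) -/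
  Wall : Type
  /-- halfspace membership: `side w x` means `x` is on the positive side of `w` -/
  side : Wall → V → Prop
  /-- graph metric on the `1`--skeleton -/
  d : V → V → ℕ
  sepFinite : ∀ x y : V, {w : Wall | ¬ (side w x ↔ side w y)}.Finite
  d_eq : ∀ x y : V, d x y = {w : Wall | ¬ (side w x ↔ side w y)}.ncard
  /-- every hyperplane is dual to some `1`--cube -/
  wall_dual : ∀ w : Wall, ∃ x y : V, d x y = 1 ∧ ¬ (side w x ↔ side w y)
  /-- the median operation of the underlying median graph -/
  median : V → V → V → V
  median_xy : ∀ x y z, d x (median x y z) + d (median x y z) y = d x y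
  median_yz : ∀ x y z, d y (median x y z) + d (median x y z) z = d y z
  median_xz : ∀ x y z, d x (median x y z) + d (median x y z) z = d x z

namespace CubeComplex

variable (X : CubeComplex)

/-- the hyperplane `w` separates `x` from `y` -/
def Sep (w : X.Wall) (x y : X.V) : Prop := ¬ (X.side w x ↔ X.side w y)

/-- the hyperplane `w` separates `x` from the set `K` -/
def SepFrom (w : X.Wall) (x : X.V) (K : Set X.V) : Prop := ∀ k ∈ K, X.Sep w x k

/-- `z` lies on a geodesic from `x` to `y` -/
def Btw (x z y : X.V) : Prop := X.d x z + X.d z y = X.d x y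

/-- a convex (interval-closed, equivalently geodesically convex) subset -/
def IsConvex (K : Set X.V) : Prop := ∀ a ∈ K, ∀ b ∈ K, ∀ z, X.Btw a z b → z ∈ K

/-- the hyperplane `w` crosses the set `K` -/
def Crosses (w : X.Wall) (K : Set X.V) : Prop := ∃ a ∈ K, ∃ b ∈ K, X.Sep w a b

/-- two subcomplexes are parallel if exactly the same hyperplanes cross them -/
def ParallelSet (K K' : Set X.V) : Prop := ∀ w : X.Wall, X.Crosses w K ↔ X.Crosses w K'

/-- the vertex set of the carrier `N(w)` of the hyperplane `w` -/
def carrier (w : X.Wall) : Set X.V := {x | ∃ y, X.d x y = 1 ∧ X.Sep w x y}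

end CubeComplex

/-- A convex subcomplex of a CAT(0) cube complex, together with its gate
(closest-point projection) map, characterized by the property that a
hyperplane separates `x` from `gate x` iff it separates `x` from the
subcomplex. -/
structure ConvexSub (X : CubeComplex) where
  carrier : Set X.V
  nonempty : carrier.Nonempty
  convex : X.IsConvex carrier
  gate : X.V → X.V
  gate_mem : ∀ x, gate x ∈ carrier
  gate_idem : ∀ x ∈ carrier, gate x = x
  gate_sep : ∀ x w, X.Sep w x (gate x) ↔ X.SepFrom w x carrier

/-- the contact graph of a CAT(0) cube complex: vertices are hyperplanes, two
hyperplanes are adjacent iff their carriers intersect (cross or osculate) -/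
def CubeComplex.contactGraph (X : CubeComplex) : SimpleGraph X.Wall where
  Adj w w' := w ≠ w' ∧ (X.carrier w ∩ X.carrier w').Nonempty
  symm := ⟨by
    rintro w w' ⟨hne, x, hx1, hx2⟩
    exact ⟨Ne.symm hne, x, hx2, hx1⟩⟩
  loopless := ⟨fun w h => h.1 rfl⟩

/-- the defining predicate of the geometric realization of the flag complex on
a graph `G`: finitely supported convex coefficients whose support is a clique -/
def FlagPred {ι : Type} (G : SimpleGraph ι) (f : ι → ℝ) : Prop :=
  (∀ i, 0 ≤ f i) ∧ (Function.support f).Finite ∧ (∑ᶠ i, f i) = 1 ∧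
    (Function.support f).Pairwise G.Adj

/-- the geometric realization of the flag simplicial complex whose 1-skeleton
is the graph `G` (the contact complex, when `G` is the contact graph) -/
def FlagRealization {ι : Type} (G : SimpleGraph ι) : Type :=
  {f : ι → ℝ // FlagPred G f}

instance {ι : Type} (G : SimpleGraph ι) : TopologicalSpace (FlagRealization G) :=
  inferInstanceAs (TopologicalSpace {f : ι → ℝ // FlagPred G f})

namespace CubeComplex

variable (X : CubeComplex)

/-- two hyperplanes cross: all four quarter-spaces are nonempty -/
def Cross (w w' : X.Wall) : Prop :=
  (∃ x, X.side w x ∧ X.side w' x) ∧ (∃ x, X.side w x ∧ ¬ X.side w' x) ∧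
  (∃ x, ¬ X.side w x ∧ X.side w' x) ∧ (∃ x, ¬ X.side w x ∧ ¬ X.side w' x)

/-- a combinatorial geodesic, recorded by its sequence of `0`--cubes -/
def IsGeodesicSeq {n : ℕ} (α : Fin (n + 1) → X.V) : Prop :=
  ∀ i j : Fin (n + 1), X.d (α i) (α j) = max (i : ℕ) (j : ℕ) - min (i : ℕ) (j : ℕ)

/-- the carrier of the hyperplane `w` inside the subcomplex `K` -/
def carrierIn (K : Set X.V) (w : X.Wall) : Set X.V :=
  {x | x ∈ K ∧ ∃ y ∈ K, X.d x y = 1 ∧ X.Sep w x y}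

end CubeComplex

/-!
Two vertices of the carrier of `w` separated by a hyperplane `u ≠ w`, together with their
neighbours across `w`, occupy all four quarter-spaces of `w` and `u`: so `u` crosses `w`.
A hyperplane separating the gates of `x` and `y` in a convex subcomplex separates `x` from `y`;
as the combinatorial hyperplane `K` lies in the carrier of `w`, the gates of consecutive vertices
of the geodesic are therefore separated by no hyperplane at all, and see the same hyperplanes
of `K`. The projection of a single vertex is a clique because all its carriers contain the gate.
-/

theorem Fin.apply_eq_apply_zero_of_castSucc_eq_succ {α : Type*} {n : ℕ} {f : Fin (n + 1) → α}
    (h : ∀ k : Fin n, f k.castSucc = f k.succ) (i : Fin (n + 1)) : f i = f 0 :=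
  Fin.induction rfl (fun k ih => (h k).symm.trans ih) i

namespace CubeComplex

variable {X : CubeComplex}

theorem side_iff_of_d_eq_one {a b : X.V} (hab : X.d a b = 1) {u w : X.Wall}
    (hw : X.Sep w a b) (hu : u ≠ w) : X.side u a ↔ X.side u b := by
  obtain ⟨c, hc⟩ := Set.ncard_eq_one.mp ((X.d_eq a b).symm.trans hab)
  have mem_iff : ∀ v, X.Sep v a b ↔ v = c := fun v => by
    rw [← Set.mem_singleton_iff, ← hc]; rfl
  by_contra h
  exact hu (((mem_iff u).mp h).trans ((mem_iff w).mp hw).symm)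

theorem cross_of_mem_carrier {w u : X.Wall} {a b : X.V}
    (ha : a ∈ X.carrier w) (hb : b ∈ X.carrier w) (hsep : X.Sep u a b) (hu : u ≠ w) :
    X.Cross w u := by
  obtain ⟨a', ha', hwa⟩ := ha
  obtain ⟨b', hb', hwb⟩ := hb
  have hua := side_iff_of_d_eq_one ha' hwa hu
  have hub := side_iff_of_d_eq_one hb' hwb hu
  unfold Sep at hwa hwb hsep
  unfold Cross
  grind

theorem carrierIn_subset_carrier (K : Set X.V) (w : X.Wall) : X.carrierIn K w ⊆ X.carrier w :=
  fun _ ⟨_, y, _, hy, hw⟩ => ⟨y, hy, hw⟩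

theorem mem_carrierIn_iff_of_forall_not_sep {K : Set X.V} {g g' : X.V} (hg : g ∈ K)
    (hg' : g' ∈ K) (hsep : ∀ u, ¬ X.Sep u g g') (w : X.Wall) :
    g ∈ X.carrierIn K w ↔ g' ∈ X.carrierIn K w := by
  have hside : ∀ u, X.side u g ↔ X.side u g' := fun u => not_not.mp (hsep u)
  have hd : ∀ z, X.d g z = X.d g' z := fun z => by
    simp only [X.d_eq, hside]
  simp only [carrierIn, Sep, Set.mem_ofPred_eq, hside, hd, hg, hg', true_and]

end CubeComplex

namespace ConvexSub

variable {X : CubeComplex} (K : ConvexSub X)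

/-- The paper's projection `π_w(x)` to the contact graph of the combinatorial hyperplane `K`. -/
def proj (x : X.V) : Set X.Wall := {w | K.gate x ∈ X.carrierIn K.carrier w}

theorem isClique_proj (x : X.V) : X.contactGraph.IsClique (K.proj x) :=
  fun _ h₁ _ h₂ hne => ⟨hne, K.gate x, X.carrierIn_subset_carrier _ _ h₁,
    X.carrierIn_subset_carrier _ _ h₂⟩

theorem side_iff_side_gate_of_sep_gate {x y : X.V} {u : X.Wall}
    (h : X.Sep u (K.gate x) (K.gate y)) : X.side u x ↔ X.side u (K.gate x) := by
  by_contra hx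
  have hxy := (K.gate_sep x u).mp hx (K.gate y) (K.gate_mem y)
  unfold CubeComplex.Sep at h hx hxy
  tauto

theorem sep_of_sep_gate {x y : X.V} {u : X.Wall} (h : X.Sep u (K.gate x) (K.gate y)) :
    X.Sep u x y := by
  have hx := K.side_iff_side_gate_of_sep_gate h
  have hy := K.side_iff_side_gate_of_sep_gate (fun h' => h h'.symm)
  unfold CubeComplex.Sep at h ⊢
  rwa [hx, hy]

theorem proj_eq_of_forall_sep_not_cross {w : X.Wall} (hK : K.carrier ⊆ X.carrier w)
    {x y : X.V} (h : ∀ u, X.Sep u x y → u ≠ w ∧ ¬ X.Cross w u) : K.proj x = K.proj y := by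
  have hgates : ∀ u, ¬ X.Sep u (K.gate x) (K.gate y) := by
    intro u hu
    obtain ⟨hne, hncross⟩ := h u (K.sep_of_sep_gate hu)
    exact hncross (X.cross_of_mem_carrier (hK (K.gate_mem x)) (hK (K.gate_mem y)) hu hne)
  ext w'
  exact X.mem_carrierIn_iff_of_forall_not_sep (K.gate_mem x) (K.gate_mem y) hgates w'

end ConvexSub

theorem bounded_geodesic_image_contact_general (X : CubeComplex) (w : X.Wall)
    (K : ConvexSub X)
    (hK : K.carrier = {x | x ∈ X.carrier w ∧ X.side w x} ∨
          K.carrier = {x | x ∈ X.carrier w ∧ ¬ X.side w x})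
    {n : ℕ} (α : Fin (n + 1) → X.V)
    (hdisj : ∀ k : Fin n, ∀ w' : X.Wall,
      X.Sep w' (α k.castSucc) (α k.succ) → w' ≠ w ∧ ¬ X.Cross w w') :
    (∀ s t : Fin (n + 1),
      {w' : X.Wall | K.gate (α s) ∈ X.carrierIn K.carrier w'} =
      {w' : X.Wall | K.gate (α t) ∈ X.carrierIn K.carrier w'}) ∧
    (∀ w₁ ∈ {w' : X.Wall | K.gate (α 0) ∈ X.carrierIn K.carrier w'},
     ∀ w₂ ∈ {w' : X.Wall | K.gate (α 0) ∈ X.carrierIn K.carrier w'},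
        w₁ = w₂ ∨ X.contactGraph.Adj w₁ w₂) := by
  have hKw : K.carrier ⊆ X.carrier w := by
    rcases hK with hK | hK <;> exact hK ▸ fun _ hx => hx.1
  have hconst : ∀ i, K.proj (α i) = K.proj (α 0) :=
    Fin.apply_eq_apply_zero_of_castSucc_eq_succ fun k =>
      K.proj_eq_of_forall_sep_not_cross hKw (hdisj k)
  exact ⟨fun s t => (hconst s).trans (hconst t).symm, fun w₁ h₁ w₂ h₂ =>
    or_iff_not_imp_left.mpr (K.isClique_proj (α 0) h₁ h₂)⟩

/-- **Bounded geodesic image for contact graphs.** Let `w` be a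
hyperplane with combinatorial hyperplane `H⁺` (realized as a convex
subcomplex `K`), and let `α` be a combinatorial geodesic none of whose dual
hyperplanes lies in the closed `1`--ball about `w` in the crossing graph
(i.e. none equals `w` or crosses `w`).  Then the projection `π_w(α)` to the
contact graph of `H⁺` is a single clique: all `0`--cubes of `α` have the same
projection, and that projection is a clique of `𝒞X`. -/
theorem bounded_geodesic_image_contact (X : CubeComplex) (w : X.Wall)
    (K : ConvexSub X)
    (hK : K.carrier = {x | x ∈ X.carrier w ∧ X.side w x} ∨
          K.carrier = {x | x ∈ X.carrier w ∧ ¬ X.side w x})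
    {n : ℕ} (α : Fin (n + 1) → X.V) (hα : X.IsGeodesicSeq α)
    (hdisj : ∀ k : Fin n, ∀ w' : X.Wall,
      X.Sep w' (α k.castSucc) (α k.succ) → w' ≠ w ∧ ¬ X.Cross w w') :
    (∀ s t : Fin (n + 1),
      {w' : X.Wall | K.gate (α s) ∈ X.carrierIn K.carrier w'} =
      {w' : X.Wall | K.gate (α t) ∈ X.carrierIn K.carrier w'}) ∧
    (∀ w₁ ∈ {w' : X.Wall | K.gate (α 0) ∈ X.carrierIn K.carrier w'},
     ∀ w₂ ∈ {w' : X.Wall | K.gate (α 0) ∈ X.carrierIn K.carrier w'},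
        w₁ = w₂ ∨ X.contactGraph.Adj w₁ w₂) :=
  bounded_geodesic_image_contact_general X w K hK α hdisj
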